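/- Let ν > 2 and set κ = Γ((ν+1)/2)(ν − 1) / (2√π Γ(ν/2)). Then for every t > 0, 1 / (1 − F_ν(t)) ≤ (t² + ν)^{ν/2} / κ. -/

import Mathlib

/-!
Write `w(u) = 1 + u²/ν`. The density `c_ν w^{-(ν+1)/2}` dominates
`(c_ν/√ν) u w^{-(ν/2+1)}`, because `|u| ≤ √(ν w)`, and the latter has the explicit antiderivative
`-(c_ν/√ν) w^{-ν/2}`; hence `1 - F_ν(t) ≥ (c_ν/√ν) w(t)^{-ν/2}`, which is
`Γ((ν+1)/2) ν^{(ν-2)/2} / (√π Γ(ν/2)) · (t² + ν)^{-ν/2}`. Finally `ν^{(ν-2)/2} ≥ (ν-1)/2` for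
`ν ≥ 2`, from `exp x ≥ 1 + x` and `log ν ≥ 1 - 1/ν`. Computing `1 - F_ν(t)` as a tail integral
needs the normalisation `∫ w^{-s} = √ν √π Γ(s - 1/2) / Γ(s)`, which the substitution
`y = x²/(1 + x²)` reduces to the Beta integral `B(1/2, s - 1/2)`.
-/

open MeasureTheory

/-- The CDF of the Student's t distribution with `ν` degrees of freedom. -/
noncomputable def tCDF (ν t : ℝ) : ℝ :=
  ∫ u in Set.Iic t,
    (Real.Gamma ((ν + 1) / 2) / (Real.sqrt (ν * Real.pi) * Real.Gamma (ν / 2))) *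
      (1 + u ^ 2 / ν) ^ (-((ν + 1) / 2))

open Real Set Filter

theorem integral_rpow_mul_one_sub_rpow {a b : ℝ} (ha : 0 < a) (hb : 0 < b) :
    ∫ x in (0 : ℝ)..1, x ^ (a - 1) * (1 - x) ^ (b - 1) = Gamma a * Gamma b / Gamma (a + b) := by
  have h := Complex.betaIntegral_eq_Gamma_mul_div a b (by simpa) (by simpa)
  rw [← Complex.ofReal_add, Complex.Gamma_ofReal, Complex.Gamma_ofReal, Complex.Gamma_ofReal,
    Complex.betaIntegral] at h
  apply Complex.ofReal_injective
  rw [← intervalIntegral.integral_ofReal]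
  push_cast
  rw [← h]
  refine intervalIntegral.integral_congr fun x hx => ?_
  rw [uIcc_of_le zero_le_one] at hx
  rw [Complex.ofReal_cpow hx.1, Complex.ofReal_cpow (sub_nonneg.2 hx.2)]
  push_cast
  ring

theorem injOn_sq_div_one_add_sq : InjOn (fun x : ℝ => x ^ 2 / (1 + x ^ 2)) (Ioi 0) := by
  intro x hx y hy hxy
  field_simp at hxy
  exact (pow_left_inj₀ (le_of_lt hx) (le_of_lt hy) two_ne_zero).1 (by linarith)

theorem image_sq_div_one_add_sq_Ioi : (fun x : ℝ => x ^ 2 / (1 + x ^ 2)) '' Ioi 0 = Ioo 0 1 := by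
  ext y
  constructor
  · rintro ⟨x, hx, rfl⟩
    have hx : 0 < x := hx
    exact ⟨by positivity, (div_lt_one (by positivity)).2 (by linarith)⟩
  · rintro ⟨hy0, hy1⟩
    have hy : 0 < y / (1 - y) := div_pos hy0 (by linarith)
    refine ⟨√(y / (1 - y)), sqrt_pos.2 hy, ?_⟩
    have : 1 - y ≠ 0 := by linarith
    simp only [sq_sqrt hy.le]
    field_simp
    ring

theorem integral_Ioi_one_add_sq_rpow_neg {s : ℝ} (hs : 1 / 2 < s) :
    ∫ x in Ioi (0 : ℝ), (1 + x ^ 2) ^ (-s) = √π * Gamma (s - 1 / 2) / (2 * Gamma s) := by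
  have hderiv (x : ℝ) :
      HasDerivAt (fun x : ℝ => x ^ 2 / (1 + x ^ 2)) (2 * x / (1 + x ^ 2) ^ 2) x := by
    refine ((hasDerivAt_pow 2 x).div ((hasDerivAt_pow 2 x).const_add 1)
      (by positivity)).congr_deriv ?_
    push_cast
    ring
  have hjacobian (x : ℝ) (hx : 0 < x) : |2 * x / (1 + x ^ 2) ^ 2| •
      ((x ^ 2 / (1 + x ^ 2)) ^ ((1 : ℝ) / 2 - 1) * (1 - x ^ 2 / (1 + x ^ 2)) ^ (s - 1 / 2 - 1)) =
      2 * (1 + x ^ 2) ^ (-s) := by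
    have hw : 0 < 1 + x ^ 2 := by positivity
    have h1 : 1 - x ^ 2 / (1 + x ^ 2) = (1 + x ^ 2)⁻¹ := by field_simp; ring
    have h2 : (x ^ 2) ^ ((1 : ℝ) / 2 - 1) = x⁻¹ := by
      rw [← rpow_natCast, ← rpow_mul hx.le]; norm_num [rpow_neg_one]
    rw [smul_eq_mul, h1, div_rpow (by positivity) hw.le, h2, inv_rpow hw.le,
      abs_of_pos (by positivity), ← rpow_natCast, ← rpow_neg hw.le]
    field_simp
    rw [← rpow_add hw, ← rpow_add hw]
    congr 1
    push_cast
    ring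
  have hsubst := integral_image_eq_integral_abs_deriv_smul measurableSet_Ioi
    (fun x _ => (hderiv x).hasDerivWithinAt) injOn_sq_div_one_add_sq
    (fun y => y ^ ((1 : ℝ) / 2 - 1) * (1 - y) ^ (s - 1 / 2 - 1))
  rw [image_sq_div_one_add_sq_Ioi, ← integral_Ioc_eq_integral_Ioo,
    ← intervalIntegral.integral_of_le zero_le_one,
    integral_rpow_mul_one_sub_rpow one_half_pos (by linarith), Gamma_one_half_eq, add_sub_cancel,
    setIntegral_congr_fun measurableSet_Ioi hjacobian, integral_const_mul] at hsubst
  rw [mul_comm 2, ← div_div, hsubst, mul_div_cancel_left₀ _ two_ne_zero]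

theorem integrable_one_add_sq_rpow_neg {s : ℝ} (hs : 1 / 2 < s) :
    Integrable fun x : ℝ => (1 + x ^ 2) ^ (-s) := by
  simpa [neg_div] using
    integrable_rpow_neg_one_add_norm_sq (E := ℝ) (r := 2 * s) (by simp; linarith)

theorem integral_one_add_sq_rpow_neg {s : ℝ} (hs : 1 / 2 < s) :
    ∫ x, (1 + x ^ 2) ^ (-s) = √π * Gamma (s - 1 / 2) / Gamma s := by
  have hint := integrable_one_add_sq_rpow_neg hs
  have heven : ∫ x in Iic (0 : ℝ), (1 + x ^ 2) ^ (-s) = ∫ x in Ioi (0 : ℝ), (1 + x ^ 2) ^ (-s) := by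
    rw [← neg_zero, ← integral_comp_neg_Ioi]
    simp only [neg_sq, neg_zero]
  rw [← intervalIntegral.integral_Iic_add_Ioi hint.integrableOn hint.integrableOn, heven,
    integral_Ioi_one_add_sq_rpow_neg hs]
  have := (Gamma_pos_of_pos (by linarith : 0 < s)).ne'
  field_simp
  ring

theorem one_add_sq_div_eq_one_add_div_sqrt_sq {ν : ℝ} (hν : 0 < ν) (u : ℝ) :
    1 + u ^ 2 / ν = 1 + (u / √ν) ^ 2 := by
  rw [div_pow, sq_sqrt hν.le]

theorem integrable_one_add_sq_div_rpow_neg {ν s : ℝ} (hν : 0 < ν) (hs : 1 / 2 < s) :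
    Integrable fun u : ℝ => (1 + u ^ 2 / ν) ^ (-s) := by
  simpa only [one_add_sq_div_eq_one_add_div_sqrt_sq hν] using
    (integrable_one_add_sq_rpow_neg hs).comp_div (sqrt_ne_zero'.2 hν)

theorem integral_one_add_sq_div_rpow_neg {ν s : ℝ} (hν : 0 < ν) (hs : 1 / 2 < s) :
    ∫ u, (1 + u ^ 2 / ν) ^ (-s) = √ν * (√π * Gamma (s - 1 / 2) / Gamma s) := by
  simp only [one_add_sq_div_eq_one_add_div_sqrt_sq hν]
  rw [Measure.integral_comp_div (fun x => (1 + x ^ 2) ^ (-s)), integral_one_add_sq_rpow_neg hs,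
    abs_of_nonneg (sqrt_nonneg ν), smul_eq_mul]

theorem abs_mul_one_add_sq_div_rpow_neg_le {ν : ℝ} (hν : 0 < ν) (s u : ℝ) :
    |u| * (1 + u ^ 2 / ν) ^ (-(s + 1)) ≤ √ν * (1 + u ^ 2 / ν) ^ (-(s + 1 / 2)) := by
  have hw : 0 < 1 + u ^ 2 / ν := by positivity
  have hsplit : (1 + u ^ 2 / ν) ^ (-(s + 1)) =
      (1 + u ^ 2 / ν) ^ (-(s + 1 / 2)) / √(1 + u ^ 2 / ν) := by
    rw [sqrt_eq_rpow, ← rpow_sub hw]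
    ring_nf
  have hu : |u| ≤ √ν * √(1 + u ^ 2 / ν) := by
    rw [← sqrt_mul hν.le, mul_add, mul_one, mul_div_cancel₀ _ hν.ne']
    exact abs_le_sqrt (by linarith)
  rw [hsplit, mul_div_left_comm, mul_comm √ν]
  gcongr
  exact (div_le_iff₀ (sqrt_pos.2 hw)).2 hu

theorem integrable_mul_one_add_sq_div_rpow_neg {ν s : ℝ} (hν : 0 < ν) (hs : 0 < s) :
    Integrable fun u : ℝ => u * (1 + u ^ 2 / ν) ^ (-(s + 1)) := by
  refine ((integrable_one_add_sq_div_rpow_neg hν (s := s + 1 / 2) (by linarith)).const_mul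
    √ν).mono' (by fun_prop) (Eventually.of_forall fun u => ?_)
  rw [norm_mul, norm_eq_abs, norm_of_nonneg (by positivity)]
  exact abs_mul_one_add_sq_div_rpow_neg_le hν s u

theorem integral_Ioi_mul_one_add_sq_div_rpow_neg {ν s : ℝ} (hν : 0 < ν) (hs : 0 < s) (t : ℝ) :
    ∫ u in Ioi t, u * (1 + u ^ 2 / ν) ^ (-(s + 1)) = ν / (2 * s) * (1 + t ^ 2 / ν) ^ (-s) := by
  have hderiv (u : ℝ) : HasDerivAt (fun u => -(ν / (2 * s)) * (1 + u ^ 2 / ν) ^ (-s))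
      (u * (1 + u ^ 2 / ν) ^ (-(s + 1))) u := by
    have hw : 0 < 1 + u ^ 2 / ν := by positivity
    refine (((((hasDerivAt_pow 2 u).div_const ν).const_add 1).rpow_const
      (p := -s) (Or.inl hw.ne')).const_mul (-(ν / (2 * s)))).congr_deriv ?_
    rw [show -s - 1 = -(s + 1) by ring]
    field_simp
    push_cast
    ring
  have hlim : Tendsto (fun u => -(ν / (2 * s)) * (1 + u ^ 2 / ν) ^ (-s)) atTop (nhds 0) := by
    have h : Tendsto (fun u : ℝ => 1 + u ^ 2 / ν) atTop atTop :=
      tendsto_atTop_add_const_left _ 1 ((tendsto_pow_atTop two_ne_zero).atTop_div_const hν)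
    simpa using ((tendsto_rpow_neg_atTop hs).comp h).const_mul (-(ν / (2 * s)))
  rw [integral_Ioi_of_hasDerivAt_of_tendsto' (fun u _ => hderiv u)
    (integrable_mul_one_add_sq_div_rpow_neg hν hs).integrableOn hlim]
  ring

noncomputable def tPDF (ν u : ℝ) : ℝ :=
  Gamma ((ν + 1) / 2) / (√(ν * π) * Gamma (ν / 2)) * (1 + u ^ 2 / ν) ^ (-((ν + 1) / 2))

theorem tCDF_eq_integral_tPDF (ν t : ℝ) : tCDF ν t = ∫ u in Iic t, tPDF ν u := rfl

theorem integrable_tPDF {ν : ℝ} (hν : 0 < ν) : Integrable (tPDF ν) :=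
  (integrable_one_add_sq_div_rpow_neg hν (by linarith)).const_mul _

theorem integral_tPDF {ν : ℝ} (hν : 0 < ν) : ∫ u, tPDF ν u = 1 := by
  unfold tPDF
  rw [integral_const_mul, integral_one_add_sq_div_rpow_neg hν (by linarith),
    show (ν + 1) / 2 - 1 / 2 = ν / 2 by ring, sqrt_mul hν.le]
  have := (Gamma_pos_of_pos (by linarith : 0 < (ν + 1) / 2)).ne'
  have := (Gamma_pos_of_pos (by linarith : 0 < ν / 2)).ne'
  have := (sqrt_pos.2 hν).ne'
  have := (sqrt_pos.2 pi_pos).ne'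
  field_simp

theorem one_sub_tCDF {ν : ℝ} (hν : 0 < ν) (t : ℝ) : 1 - tCDF ν t = ∫ u in Ioi t, tPDF ν u := by
  rw [← integral_tPDF hν, tCDF_eq_integral_tPDF,
    ← intervalIntegral.integral_Iic_add_Ioi (integrable_tPDF hν).integrableOn
      (integrable_tPDF hν).integrableOn, add_sub_cancel_left]

theorem le_one_sub_tCDF {ν : ℝ} (hν : 0 < ν) (t : ℝ) :
    Gamma ((ν + 1) / 2) / (√π * Gamma (ν / 2)) * ν ^ ((ν - 2) / 2) * (t ^ 2 + ν) ^ (-(ν / 2)) ≤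
      1 - tCDF ν t := by
  set c := Gamma ((ν + 1) / 2) / (√(ν * π) * Gamma (ν / 2)) with hc
  have hsqrt := (sqrt_pos.2 hν).ne'
  have hdensity (u : ℝ) : c / √ν * (u * (1 + u ^ 2 / ν) ^ (-(ν / 2 + 1))) ≤ tPDF ν u := by
    calc c / √ν * (u * (1 + u ^ 2 / ν) ^ (-(ν / 2 + 1)))
        ≤ c / √ν * (√ν * (1 + u ^ 2 / ν) ^ (-(ν / 2 + 1 / 2))) := by
          gcongr c / √ν * ?_
          exact (mul_le_mul_of_nonneg_right (le_abs_self u) (by positivity)).trans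
            (abs_mul_one_add_sq_div_rpow_neg_le hν _ u)
      _ = tPDF ν u := by
          rw [tPDF, ← hc, show (ν + 1) / 2 = ν / 2 + 1 / 2 by ring]
          field_simp
  have hpow : (1 + t ^ 2 / ν) ^ (-(ν / 2)) = ν ^ (ν / 2) * (t ^ 2 + ν) ^ (-(ν / 2)) := by
    rw [show 1 + t ^ 2 / ν = ν⁻¹ * (t ^ 2 + ν) by field_simp; ring,
      mul_rpow (by positivity) (by positivity), inv_rpow hν.le, ← rpow_neg hν.le, neg_neg]
  have hν2 : ν ^ ((ν - 2) / 2) = ν ^ (ν / 2) / ν := by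
    rw [show (ν - 2) / 2 = ν / 2 - 1 by ring, rpow_sub hν, rpow_one]
  calc Gamma ((ν + 1) / 2) / (√π * Gamma (ν / 2)) * ν ^ ((ν - 2) / 2) * (t ^ 2 + ν) ^ (-(ν / 2))
      = ∫ u in Ioi t, c / √ν * (u * (1 + u ^ 2 / ν) ^ (-(ν / 2 + 1))) := by
        rw [integral_const_mul, integral_Ioi_mul_one_add_sq_div_rpow_neg hν (by positivity), hpow,
          hν2, hc, sqrt_mul hν.le]
        field_simp
        rw [sq_sqrt hν.le]
    _ ≤ 1 - tCDF ν t := by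
        rw [one_sub_tCDF hν]
        exact setIntegral_mono
          ((integrable_mul_one_add_sq_div_rpow_neg hν (by positivity)).const_mul _).integrableOn
          (integrable_tPDF hν).integrableOn hdensity

theorem sub_one_div_two_le_rpow {ν : ℝ} (hν : 2 ≤ ν) : (ν - 1) / 2 ≤ ν ^ ((ν - 2) / 2) := by
  have hlog := one_sub_inv_le_log_of_pos (by linarith : 0 < ν)
  calc (ν - 1) / 2 ≤ 1 + (ν - 2) / 2 * (1 - ν⁻¹) := by
        field_simp
        nlinarith
    _ ≤ 1 + (ν - 2) / 2 * log ν := by gcongr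
    _ ≤ ν ^ ((ν - 2) / 2) := by
        rw [rpow_def_of_pos (by linarith), mul_comm, add_comm]
        exact add_one_le_exp _

theorem mills_ratio_t_corollary_general (ν : ℝ) (hν : 2 < ν) (t : ℝ) :
    1 / (1 - tCDF ν t) ≤
      (t ^ 2 + ν) ^ (ν / 2) /
        (Real.Gamma ((ν + 1) / 2) * (ν - 1) / (2 * Real.sqrt Real.pi * Real.Gamma (ν / 2))) := by
  set κ := Gamma ((ν + 1) / 2) * (ν - 1) / (2 * √π * Gamma (ν / 2))
  have hΓ := Gamma_pos_of_pos (by linarith : 0 < (ν + 1) / 2)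
  have hκ : 0 < κ := div_pos (mul_pos hΓ (by linarith)) (by positivity)
  have hκ_le : κ ≤ Gamma ((ν + 1) / 2) / (√π * Gamma (ν / 2)) * ν ^ ((ν - 2) / 2) :=
    calc κ = Gamma ((ν + 1) / 2) / (√π * Gamma (ν / 2)) * ((ν - 1) / 2) := by ring
      _ ≤ _ := by gcongr; exact sub_one_div_two_le_rpow hν.le
  have htail : κ * (t ^ 2 + ν) ^ (-(ν / 2)) ≤ 1 - tCDF ν t :=
    (mul_le_mul_of_nonneg_right hκ_le (by positivity)).trans (le_one_sub_tCDF (by linarith) t)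
  calc 1 / (1 - tCDF ν t) ≤ 1 / (κ * (t ^ 2 + ν) ^ (-(ν / 2))) :=
        one_div_le_one_div_of_le (by positivity) htail
    _ = (t ^ 2 + ν) ^ (ν / 2) / κ := by
        rw [rpow_neg (by positivity)]
        field_simp

/-- Corollary of the Mills-ratio type bound with `m = 1`:
for `t > 0`, `1 / (1 - F_ν(t)) ≤ (t² + ν)^{ν/2} / κ`. -/
theorem mills_ratio_t_corollary (ν : ℝ) (hν : 2 < ν) (t : ℝ) (ht : 0 < t) :
    1 / (1 - tCDF ν t) ≤
      (t ^ 2 + ν) ^ (ν / 2) /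
        (Real.Gamma ((ν + 1) / 2) * (ν - 1) / (2 * Real.sqrt Real.pi * Real.Gamma (ν / 2))) :=
  mills_ratio_t_corollary_general ν hν t
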